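/- arXiv:2205.11418 — 6 statements merged into one kernel-verified Lean document; each statement's English description precedes it below -/
import Mathlib

section
/- Let n and i be positive integers with gcd(2i, n) = gcd(i, n). Then the map g : F_{2^n} → F_{2^n} given by g(x) = x^{2^i + 1} is a permutation of F_{2^n}. -/
/-! A common divisor `d` of `2^i + 1` and `2^n - 1` divides `2^{2i} - 1`, hence
`gcd(2^{2i} - 1, 2^n - 1) = 2^{gcd(2i,n)} - 1 = 2^{gcd(i,n)} - 1`, which divides `2^i - 1`.
So `d ∣ 2`, and `d` is odd: `2^i + 1` is prime to `2^n - 1 = |F_{2^n}ˣ|`, and raising to a power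
prime to the order of the unit group permutes the field. -/

lemma Nat.pow_add_one_dvd_pow_two_mul_sub_one (a i : ℕ) : a ^ i + 1 ∣ a ^ (2 * i) - 1 := by
  rw [mul_comm, pow_mul, ← one_pow 2, Nat.sq_sub_sq, one_pow]
  exact dvd_mul_right _ _

lemma Nat.gcd_pow_add_one_pow_sub_one_dvd_two {a i n : ℕ}
    (h : Nat.gcd (2 * i) n = Nat.gcd i n) : Nat.gcd (a ^ i + 1) (a ^ n - 1) ∣ 2 := by
  set d := Nat.gcd (a ^ i + 1) (a ^ n - 1)
  have hd_plus : d ∣ a ^ i + 1 := Nat.gcd_dvd_left _ _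
  have hd_minus : d ∣ a ^ i - 1 :=
    calc d ∣ Nat.gcd (a ^ (2 * i) - 1) (a ^ n - 1) :=
          Nat.dvd_gcd (hd_plus.trans (Nat.pow_add_one_dvd_pow_two_mul_sub_one a i))
            (Nat.gcd_dvd_right _ _)
      _ = Nat.gcd (a ^ i - 1) (a ^ n - 1) := by
          rw [Nat.pow_sub_one_gcd_pow_sub_one, Nat.pow_sub_one_gcd_pow_sub_one, h]
      _ ∣ a ^ i - 1 := Nat.gcd_dvd_left _ _
  have h_diff : (a ^ i + 1) - (a ^ i - 1) ∣ 2 := by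
    rcases Nat.eq_zero_or_pos (a ^ i) with h0 | hpos
    · simp [h0]
    · rw [show (a ^ i + 1) - (a ^ i - 1) = 2 by omega]
  exact (Nat.dvd_sub hd_plus hd_minus).trans h_diff

lemma Nat.coprime_two_pow_add_one_two_pow_sub_one {i n : ℕ} (hn : 0 < n)
    (h : Nat.gcd (2 * i) n = Nat.gcd i n) : Nat.Coprime (2 ^ i + 1) (2 ^ n - 1) := by
  have h_odd : Odd (2 ^ n - 1) :=
    Nat.Even.sub_odd Nat.one_le_two_pow (Nat.even_pow.2 ⟨even_two, hn.ne'⟩) odd_one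
  exact ((Nat.coprime_two_left.2 h_odd).coprime_dvd_left
    (Nat.gcd_pow_add_one_pow_sub_one_dvd_two h)).eq_one_of_dvd (Nat.gcd_dvd_right _ _)

lemma GroupWithZero.pow_bijective_of_coprime_card_units {G₀ : Type*} [GroupWithZero G₀] {k : ℕ}
    (hk : k ≠ 0) (h : (Nat.card G₀ˣ).Coprime k) : Function.Bijective (· ^ k : G₀ → G₀) := by
  have h_units := h.pow_left_bijective
  refine ⟨fun x y hxy => ?_, fun y => ?_⟩
  · simp only at hxy
    by_cases hx : x = 0
    · subst hx
      rw [zero_pow hk, eq_comm, pow_eq_zero_iff hk] at hxy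
      exact hxy.symm
    have hy : y ≠ 0 := fun hy => hx (by rwa [hy, zero_pow hk, pow_eq_zero_iff hk] at hxy)
    have h_eq : Units.mk0 x hx = Units.mk0 y hy :=
      h_units.injective (Units.ext (by simpa using hxy))
    simpa using congrArg Units.val h_eq
  · by_cases hy : y = 0
    · exact ⟨0, by simp [hy, zero_pow hk]⟩
    obtain ⟨u, hu⟩ := h_units.surjective (Units.mk0 y hy)
    exact ⟨u, by simpa using congrArg Units.val hu⟩

theorem stmt1_general (n i : ℕ) (hn : 0 < n)
    (h : Nat.gcd (2 * i) n = Nat.gcd i n) :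
    Function.Bijective (fun x : GaloisField 2 n => x ^ (2 ^ i + 1)) := by
  have h_card : Nat.card (GaloisField 2 n)ˣ = 2 ^ n - 1 := by
    rw [Nat.card_units, GaloisField.card 2 n hn.ne']
  apply GroupWithZero.pow_bijective_of_coprime_card_units (by positivity)
  rw [h_card]
  exact (Nat.coprime_two_pow_add_one_two_pow_sub_one hn h).symm

/-- if `gcd(2i, n) = gcd(i, n)`, then `x ↦ x^{2^i+1}` is a
permutation of `F_{2^n}`. -/
theorem stmt1 (n i : ℕ) (hn : 0 < n) (hi : 0 < i)
    (h : Nat.gcd (2 * i) n = Nat.gcd i n) :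
    Function.Bijective (fun x : GaloisField 2 n => x ^ (2 ^ i + 1)) :=
  stmt1_general n i hn h
end

section
/- Let n be an even positive integer and let i be a positive integer. Then the map h : F_{2^n} → F_{2^n} given by h(x) = x + tr(x^{2^i+1}) is an involution, i.e., h(h(x)) = x for all x ∈ F_{2^n}. -/
/-!
Write `q = 2^i + 1` and `t = tr(x^q)`. Since `t ∈ F₂` is idempotent,
`(x + t)^q = (x^{2^i} + t)(x + t) = x^q + t (x^{2^i} + x) + t`. The trace is additive, `F₂`-linear and
Frobenius invariant, so `tr(t (x^{2^i} + x)) = t (tr x + tr x) = 0`, while `tr t = n t = 0` for even `n`.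
Hence `tr((x + t)^q) = t`, and applying the map twice adds `t + t = 0`.
-/

/-- The absolute trace from `F_{2^n}` to its prime field, computed inside the field. -/
noncomputable def aTr {K : Type} [CommRing K] (n : ℕ) (x : K) : K :=
  ∑ k ∈ Finset.range n, x ^ 2 ^ k

theorem GaloisField.pow_card_pow_self {p : ℕ} [Fact p.Prime] {n : ℕ} (x : GaloisField p n) :
    x ^ p ^ n = x := by
  rcases eq_or_ne n 0 with rfl | hn
  · rw [pow_zero, pow_one]
  · have : Fintype (GaloisField p n) := Fintype.ofFinite _
    rw [← GaloisField.card p n hn, Nat.card_eq_fintype_card]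
    exact FiniteField.pow_card x

section Frobenius

variable {K : Type} [CommRing K] {n : ℕ}

theorem aTr_mul_of_isIdempotentElem {t : K} (ht : IsIdempotentElem t) (y : K) :
    aTr n (t * y) = t * aTr n y := by
  simp only [aTr, Finset.mul_sum, mul_pow, ht.pow_eq (pow_ne_zero _ two_ne_zero)]

variable (hK : ∀ a : K, a ^ 2 ^ n = a)
include hK

theorem aTr_sq (a : K) : aTr n (a ^ 2) = aTr n a := by
  have h := (Finset.sum_range_succ' (fun k => a ^ 2 ^ k) n).symm.trans (Finset.sum_range_succ _ n)
  simp only [pow_zero, pow_one, hK] at h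
  simpa only [aTr, ← pow_mul, ← pow_succ'] using add_right_cancel h

theorem aTr_pow_two_pow (j : ℕ) (a : K) : aTr n (a ^ 2 ^ j) = aTr n a := by
  induction j with
  | zero => rw [pow_zero, pow_one]
  | succ j ih => rw [pow_succ, pow_mul, aTr_sq hK, ih]

end Frobenius

section CharTwo

variable {K : Type} [CommRing K] [CharP K 2] {n : ℕ}

theorem aTr_add (a b : K) : aTr n (a + b) = aTr n a + aTr n b := by
  simp only [aTr, add_pow_char_pow, Finset.sum_add_distrib]

theorem sq_aTr (a : K) : aTr n a ^ 2 = aTr n (a ^ 2) := by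
  simp only [aTr, sum_pow_char, ← pow_mul, mul_comm]

theorem aTr_eq_zero_of_isIdempotentElem (hn : Even n) {t : K} (ht : IsIdempotentElem t) :
    aTr n t = 0 := by
  simp [aTr, ht.pow_eq (pow_ne_zero _ two_ne_zero), (CharP.cast_eq_zero_iff K 2 n).2 hn.two_dvd]

theorem add_pow_two_pow_add_one_of_isIdempotentElem {t : K} (ht : IsIdempotentElem t) (x : K)
    (i : ℕ) : (x + t) ^ (2 ^ i + 1) = x ^ (2 ^ i + 1) + t * (x ^ 2 ^ i + x) + t := by
  rw [pow_succ, add_pow_char_pow, ht.pow_eq (pow_ne_zero _ two_ne_zero)]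
  linear_combination ht.eq

variable (hK : ∀ a : K, a ^ 2 ^ n = a)
include hK

theorem isIdempotentElem_aTr (a : K) : IsIdempotentElem (aTr n a) := by
  rw [IsIdempotentElem, ← sq, sq_aTr, aTr_sq hK]

theorem aTr_add_pow_two_pow_add_one_of_isIdempotentElem (hn : Even n) {t : K}
    (ht : IsIdempotentElem t) (x : K) (i : ℕ) :
    aTr n ((x + t) ^ (2 ^ i + 1)) = aTr n (x ^ (2 ^ i + 1)) := by
  rw [add_pow_two_pow_add_one_of_isIdempotentElem ht, aTr_add, aTr_add,
    aTr_mul_of_isIdempotentElem ht, aTr_add, aTr_pow_two_pow hK, CharTwo.add_self_eq_zero,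
    mul_zero, add_zero, aTr_eq_zero_of_isIdempotentElem hn ht, add_zero]

theorem involutive_add_aTr_pow_two_pow_add_one (hn : Even n) (i : ℕ) :
    Function.Involutive fun x : K => x + aTr n (x ^ (2 ^ i + 1)) := fun x => by
  simp only [aTr_add_pow_two_pow_add_one_of_isIdempotentElem hK hn (isIdempotentElem_aTr hK _),
    CharTwo.add_cancel_right]

end CharTwo

theorem stmt2_general (n i : ℕ) (hne : Even n) :
    ∀ x : GaloisField 2 n,
      ((x + aTr n (x ^ (2 ^ i + 1))) +
        aTr n ((x + aTr n (x ^ (2 ^ i + 1))) ^ (2 ^ i + 1))) = x :=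
  involutive_add_aTr_pow_two_pow_add_one GaloisField.pow_card_pow_self hne i

/-- for even `n`, the map `h(x) = x + tr(x^{2^i+1})` is an involution
on `F_{2^n}`. -/
theorem stmt2 (n i : ℕ) (hn : 0 < n) (hne : Even n) (hi : 0 < i) :
    ∀ x : GaloisField 2 n,
      ((x + aTr n (x ^ (2 ^ i + 1))) +
        aTr n ((x + aTr n (x ^ (2 ^ i + 1))) ^ (2 ^ i + 1))) = x :=
  stmt2_general n i hne
end

section
/- Let c ∈ F_{2^d} \ F_2 with d = gcd(2i, n) = gcd(i, n) < n, let n be even, and let a, b ∈ F_{2^n}. For ε₁, ε₂ ∈ F_2 define S_{ε₁ε₂}(a,b) = {x ∈ F_{2^n} : (x+a+ε₁)^{2^i+1} + c(x+ε₂)^{2^i+1} = b, tr(L(a)·x) = ε₁ + ε₂, tr(x^{2^i+1}) = ε₂} and S'_{ε₁ε₂}(a,b) = {x ∈ F_{2^n} : (x+a+ε₁)^{2^i+1} + c(x+ε₂)^{2^i+1} = b, tr(L(a)·x) = ε₁ + ε₂ + 1, tr(x^{2^i+1}) = ε₂}, where L(a) = a^{2^i} + a^{2^{-i}}. Then: (i)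 at least one of S_{00}(a,b) and S_{11}(a,b) is empty; (ii) at least one of S_{01}(a,b) and S_{10}(a,b) is empty; (iii) at least one of S'_{00}(a,b) and S'_{11}(a,b) is empty; (iv) at least one of S'_{01}(a,b) and S'_{10}(a,b) is empty. -/
/-- The set `S_{ε₁ε₂}(a,b)`; here `L(a) = a^{2^i} + a^{2^{-i}}` with
`a^{2^{-i}} = a^{2^{(n-1)i}}` (inverse Frobenius). -/
def Sset (n i : ℕ) (c a b ε₁ ε₂ : GaloisField 2 n) : Set (GaloisField 2 n) :=
  {x | (x + a + ε₁) ^ (2 ^ i + 1) + c * (x + ε₂) ^ (2 ^ i + 1) = b ∧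
       aTr n ((a ^ 2 ^ i + a ^ 2 ^ ((n - 1) * i)) * x) = ε₁ + ε₂ ∧
       aTr n (x ^ (2 ^ i + 1)) = ε₂}

/-- The set `S'_{ε₁ε₂}(a,b)`. -/
def Sset' (n i : ℕ) (c a b ε₁ ε₂ : GaloisField 2 n) : Set (GaloisField 2 n) :=
  {x | (x + a + ε₁) ^ (2 ^ i + 1) + c * (x + ε₂) ^ (2 ^ i + 1) = b ∧
       aTr n ((a ^ 2 ^ i + a ^ 2 ^ ((n - 1) * i)) * x) = ε₁ + ε₂ + 1 ∧
       aTr n (x ^ (2 ^ i + 1)) = ε₂}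

open Finset

theorem pow_pow_eq_self {M : Type*} [Monoid M] {q : ℕ} {x : M} (h : x ^ q = x) (k : ℕ) :
    x ^ q ^ k = x := by
  simpa only [pow_iterate] using Function.iterate_fixed (f := (· ^ q)) h k

section RelTrace

variable {R : Type*} [CommRing R]

def relTrace (q m : ℕ) (x : R) : R := ∑ k ∈ range m, x ^ q ^ k

theorem relTrace_add (p : ℕ) [ExpChar R p] (d m : ℕ) (x y : R) :
    relTrace (p ^ d) m (x + y) = relTrace (p ^ d) m x + relTrace (p ^ d) m y := by
  simp only [relTrace, ← sum_add_distrib, ← pow_mul, add_pow_expChar_pow]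

theorem relTrace_pow {q m : ℕ} (hfix : ∀ w : R, w ^ q ^ m = w) (x : R) :
    relTrace q m (x ^ q) = relTrace q m x := by
  have h := sum_range_succ' (fun k => x ^ q ^ k) m
  rw [sum_range_succ, hfix, pow_zero, pow_one] at h
  simpa only [relTrace, ← pow_mul, ← pow_succ'] using (add_right_cancel h).symm

theorem relTrace_pow_pow {q m : ℕ} (hfix : ∀ w : R, w ^ q ^ m = w) (j : ℕ) (x : R) :
    relTrace q m (x ^ q ^ j) = relTrace q m x := by
  induction j with
  | zero => rw [pow_zero, pow_one]
  | succ j ih => rw [pow_succ, pow_mul, relTrace_pow hfix, ih]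

theorem relTrace_of_pow_eq_self {q : ℕ} (m : ℕ) {e : R} (he : e ^ q = e) :
    relTrace q m e = m * e := by
  simp only [relTrace, pow_pow_eq_self he, sum_const, card_range, nsmul_eq_mul]

end RelTrace

section CharacteristicTwo

variable {F : Type*} [Field F] [CharP F 2]

theorem relTrace_add_pow_eq_zero {d m : ℕ} (hfix : ∀ w : F, w ^ (2 ^ d) ^ m = w) (j : ℕ)
    (s : F) : relTrace (2 ^ d) m (s + s ^ (2 ^ d) ^ j) = 0 := by
  rw [relTrace_add 2, relTrace_pow_pow hfix, CharTwo.add_self_eq_zero]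

theorem eq_one_of_add_pow_eq_one_add {d m : ℕ} (hm : Odd m)
    (hfix : ∀ w : F, w ^ (2 ^ d) ^ m = w) {c : F} (hc : c ^ 2 ^ d = c) {e : ℕ} {s : F}
    (hs : s + s ^ (2 ^ d) ^ e = 1 + c) : c = 1 := by
  have h1c : (1 + c) ^ 2 ^ d = 1 + c := by rw [add_pow_char_pow, one_pow, hc]
  have htr := relTrace_add_pow_eq_zero hfix e s
  rw [hs, relTrace_of_pow_eq_self m h1c,
    natCast_eq_one_of_odd_of_two_eq_zero hm CharTwo.two_eq_zero, one_mul] at htr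
  exact (CharTwo.add_eq_zero.mp htr).symm

def goldMap (q : ℕ) (a c x : F) : F := (x + a) ^ (q + 1) + c * x ^ (q + 1)

theorem goldMap_add_add_goldMap (k : ℕ) (a c x u : F) :
    goldMap (2 ^ k) a c (x + u) + goldMap (2 ^ k) a c x =
      (1 + c) * (x * u ^ 2 ^ k + x ^ 2 ^ k * u + u ^ (2 ^ k + 1)) +
        (a * u ^ 2 ^ k + a ^ 2 ^ k * u) := by
  simp only [goldMap, pow_succ _ (2 ^ k), add_pow_char_pow]
  linear_combination (x ^ 2 ^ k * x + a * x ^ 2 ^ k + a ^ 2 ^ k * x + a ^ 2 ^ k * a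
    + c * x ^ 2 ^ k * x) * CharTwo.two_eq_zero (R := F)

theorem goldMap_injective {d m : ℕ} (hm : Odd m) (hfix : ∀ w : F, w ^ (2 ^ d) ^ m = w)
    {c : F} (hc : c ^ 2 ^ d = c) (hc1 : c ≠ 1) (a : F) (e : ℕ) :
    Function.Injective (goldMap (2 ^ (d * e)) a c) := by
  intro x z hxz
  by_contra hxz_ne
  set u := x + z
  have hu : u ≠ 0 := fun h => hxz_ne (CharTwo.add_eq_zero.mp h)
  have hdiff : (1 + c) * (x * u ^ 2 ^ (d * e) + x ^ 2 ^ (d * e) * u + u ^ (2 ^ (d * e) + 1)) +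
      (a * u ^ 2 ^ (d * e) + a ^ 2 ^ (d * e) * u) = 0 := by
    have hz : x + u = z := by rw [← add_assoc, CharTwo.add_self_eq_zero, zero_add]
    rw [← goldMap_add_add_goldMap, hz, hxz, CharTwo.add_self_eq_zero]
  have h1c : (1 + c) ^ 2 ^ (d * e) = 1 + c := by
    rw [add_pow_char_pow, one_pow, pow_mul, pow_pow_eq_self hc]
  -- dividing `hdiff` by `u ^ (q + 1)`, `q = 2 ^ (d * e)`, gives `s + s ^ q = 1 + c` for this `s`
  refine hc1 (eq_one_of_add_pow_eq_one_add hm hfix hc (e := e)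
    (s := a / u + (1 + c) * (x / u)) ?_)
  rw [← pow_mul, add_pow_char_pow, mul_pow, div_pow, div_pow, h1c]
  field_simp
  linear_combination hdiff - (1 + c) * u ^ (2 ^ (d * e) + 1) * CharTwo.two_eq_zero (R := F)

end CharacteristicTwo

section AbsoluteTrace

variable {F : Type} [Field F] [CharP F 2]

theorem aTr_add_one_pow {n : ℕ} (hn : Even n)
    (hfix : ∀ w : F, w ^ 2 ^ n = w) (k : ℕ) (y : F) :
    aTr n ((y + 1) ^ (2 ^ k + 1)) = aTr n (y ^ (2 ^ k + 1)) := by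
  have haTr : ∀ x : F, aTr n x = relTrace (2 ^ 1) n x := fun x => by rw [pow_one]; rfl
  have hfix' : ∀ w : F, w ^ (2 ^ 1) ^ n = w := by simpa only [pow_one] using hfix
  have hexpand : (y + 1) ^ (2 ^ k + 1) = y ^ (2 ^ k + 1) + (y + y ^ (2 ^ 1) ^ k) + 1 := by
    rw [pow_one, pow_succ, add_pow_char_pow, one_pow]
    ring
  rw [haTr, haTr, hexpand, relTrace_add 2, relTrace_add 2, relTrace_add_pow_eq_zero hfix',
    relTrace_of_pow_eq_self n (one_pow _),
    natCast_eq_zero_of_even_of_two_eq_zero hn CharTwo.two_eq_zero, zero_mul, add_zero, add_zero]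

theorem eq_empty_or_add_one_eq_empty {n k : ℕ} (hn : Even n)
    (hfix : ∀ w : F, w ^ 2 ^ n = w) {a b c : F}
    (hinj : ∀ a' : F, Function.Injective (goldMap (2 ^ k) a' c)) {S : F → F → Set F}
    (hS : ∀ ε₁ ε₂, S ε₁ ε₂ ⊆
      {x | (x + a + ε₁) ^ (2 ^ k + 1) + c * (x + ε₂) ^ (2 ^ k + 1) = b ∧
        aTr n (x ^ (2 ^ k + 1)) = ε₂})
    (ε₁ ε₂ : F) : S ε₁ ε₂ = ∅ ∨ S (ε₁ + 1) (ε₂ + 1) = ∅ := by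
  by_contra! h
  obtain ⟨⟨x, hx⟩, ⟨y, hy⟩⟩ := h
  obtain ⟨hxb, hxt⟩ := hS _ _ hx
  obtain ⟨hyb, hyt⟩ := hS _ _ hy
  have hxy : x + ε₂ = y + (ε₂ + 1) := by
    have hx' : x + ε₂ + (a + ε₁ + ε₂) = x + a + ε₁ := by
      linear_combination ε₂ * CharTwo.two_eq_zero (R := F)
    have hy' : y + (ε₂ + 1) + (a + ε₁ + ε₂) = y + a + (ε₁ + 1) := by
      linear_combination ε₂ * CharTwo.two_eq_zero (R := F)
    exact hinj (a + ε₁ + ε₂) (by rw [goldMap, goldMap, hx', hy', hxb, hyb])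
  have hxy1 : x = y + 1 := by linear_combination hxy
  rw [hxy1, aTr_add_one_pow hn hfix, hyt] at hxt
  exact one_ne_zero (by linear_combination hxt)

end AbsoluteTrace

theorem odd_of_gcd_two_mul_eq_gcd {i n d m : ℕ} (hn : n ≠ 0) (hd2 : d = Nat.gcd (2 * i) n)
    (hd1 : d = Nat.gcd i n) (hm : n = d * m) : Odd m := by
  rw [← Nat.not_even_iff_odd]
  rintro ⟨k, rfl⟩
  have hdvd : 2 * d ∣ Nat.gcd (2 * i) n :=
    Nat.dvd_gcd (mul_dvd_mul_left 2 (hd1 ▸ Nat.gcd_dvd_left i n)) ⟨k, by rw [hm]; ring⟩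
  rw [← hd2] at hdvd
  have hd : 0 < d := hd1 ▸ Nat.gcd_pos_of_pos_right i (Nat.pos_of_ne_zero hn)
  have := Nat.le_of_dvd hd hdvd
  omega

theorem GaloisField.pow_pow_eq_self (p : ℕ) [Fact p.Prime] {n : ℕ} (hn : n ≠ 0)
    (x : GaloisField p n) : x ^ p ^ n = x := by
  have : Fintype (GaloisField p n) := Fintype.ofFinite _
  rw [← GaloisField.card p n hn, Nat.card_eq_fintype_card]
  exact FiniteField.pow_card x

theorem stmt5_general (n i d : ℕ) (hne : Even n)
    (hd2 : d = Nat.gcd (2 * i) n) (hd1 : d = Nat.gcd i n) (hdn : d < n)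
    (c : GaloisField 2 n) (hc : c ^ 2 ^ d = c) (hc1 : c ≠ 1)
    (a b : GaloisField 2 n) :
    (Sset n i c a b 0 0 = ∅ ∨ Sset n i c a b 1 1 = ∅) ∧
    (Sset n i c a b 0 1 = ∅ ∨ Sset n i c a b 1 0 = ∅) ∧
    (Sset' n i c a b 0 0 = ∅ ∨ Sset' n i c a b 1 1 = ∅) ∧
    (Sset' n i c a b 0 1 = ∅ ∨ Sset' n i c a b 1 0 = ∅) := by
  have hn : n ≠ 0 := by omega
  have hfix := GaloisField.pow_pow_eq_self 2 hn
  obtain ⟨e, rfl⟩ : d ∣ i := hd1 ▸ Nat.gcd_dvd_left i n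
  obtain ⟨m, hmn⟩ : d ∣ n := hd1 ▸ Nat.gcd_dvd_right _ n
  have hinj := goldMap_injective (odd_of_gcd_two_mul_eq_gcd hn hd2 hd1 hmn)
    (fun w => by rw [← pow_mul, ← hmn, hfix]) hc hc1 (e := e)
  have hS := eq_empty_or_add_one_eq_empty hne hfix hinj (S := Sset n (d * e) c a b)
    fun _ _ _ hx => ⟨hx.1, hx.2.2⟩
  have hS' := eq_empty_or_add_one_eq_empty hne hfix hinj (S := Sset' n (d * e) c a b)
    fun _ _ _ hx => ⟨hx.1, hx.2.2⟩
  refine ⟨?_, ?_, ?_, ?_⟩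
  · simpa only [zero_add] using hS 0 0
  · simpa only [zero_add, CharTwo.add_self_eq_zero] using hS 0 1
  · simpa only [zero_add] using hS' 0 0
  · simpa only [zero_add, CharTwo.add_self_eq_zero] using hS' 0 1

/-- with `c ∈ F_{2^d} \ F_2`, `d = gcd(2i,n) = gcd(i,n) < n` and `n`
even, at least one of each of the pairs `S_{00}, S_{11}`; `S_{01}, S_{10}`;
`S'_{00}, S'_{11}`; `S'_{01}, S'_{10}` is empty. -/
theorem stmt5 (n i d : ℕ) (hne : Even n)
    (hd2 : d = Nat.gcd (2 * i) n) (hd1 : d = Nat.gcd i n) (hdn : d < n)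
    (c : GaloisField 2 n) (hc : c ^ 2 ^ d = c) (hc0 : c ≠ 0) (hc1 : c ≠ 1)
    (a b : GaloisField 2 n) :
    (Sset n i c a b 0 0 = ∅ ∨ Sset n i c a b 1 1 = ∅) ∧
    (Sset n i c a b 0 1 = ∅ ∨ Sset n i c a b 1 0 = ∅) ∧
    (Sset' n i c a b 0 0 = ∅ ∨ Sset' n i c a b 1 1 = ∅) ∧
    (Sset' n i c a b 0 1 = ∅ ∨ Sset' n i c a b 1 0 = ∅) :=
  stmt5_general n i d hne hd2 hd1 hdn c hc hc1 a b
end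

section
/- Let n = 3d with d = gcd(2i, n) = gcd(i, n), let c ∈ F_{2^d} \ F_2, and let w ∈ F_{2^n}^×. Then w + w^{2^i} = c·tr^n_d(w)·(1/c) + nr^n_d(w)·(1/w^{2^i+1}); in particular { 1/c, 1/w^{2^i+1}, w + w^{2^i} } is linearly dependent over F_{2^d}. -/
/-!
Write `q = 2^d`. Since `gcd(i, 3d) = d`, the exponent `i` is `d` or `2d` modulo `3d`, so `w^{2^i}`
is one of the two nontrivial conjugates of `w` over `F_q`, and `w^{2^i+1}` is the product of `w`
with that conjugate. Dividing the norm `w · w^q · w^{q²}` by it leaves the third conjugate, and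
in characteristic two `tr(w) + (third conjugate) = w + w^{2^i}`. The coefficients `c·tr(w)`,
`nr(w)` and `1` of the dependence relation lie in `F_q` because the trace and the norm are fixed
by `x ↦ x^q`.
-/

/-- The relative trace `tr^n_d : F_{2^n} → F_{2^d}` (with `n = d*m`),
`tr^n_d(x) = Σ_{k=0}^{m-1} x^{2^{dk}}`, computed inside the field. -/
noncomputable def relTr {K : Type} [CommRing K] (d m : ℕ) (x : K) : K :=
  ∑ k ∈ Finset.range m, x ^ 2 ^ (d * k)

/-- The relative norm `nr^n_d : F_{2^n} → F_{2^d}` (with `n = d*m`),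
`nr^n_d(x) = Π_{k=0}^{m-1} x^{2^{dk}}`, computed inside the field. -/
noncomputable def relNr {K : Type} [CommRing K] (d m : ℕ) (x : K) : K :=
  ∏ k ∈ Finset.range m, x ^ 2 ^ (d * k)

@[to_additive]
theorem Finset.prod_range_succ_shift_of_eq {M : Type*} [CommMonoid M] (f : ℕ → M) {m : ℕ}
    (hf : f m = f 0) : ∏ k ∈ Finset.range m, f (k + 1) = ∏ k ∈ Finset.range m, f k := by
  cases m with
  | zero => rfl
  | succ m => rw [Finset.prod_range_succ, hf, ← Finset.prod_range_succ']

theorem Nat.mod_three_mul_eq_of_gcd_eq {i d : ℕ} (h : Nat.gcd i (3 * d) = d) :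
    i % (3 * d) = d ∨ i % (3 * d) = 2 * d := by
  rcases Nat.eq_zero_or_pos d with rfl | hd
  · simp_all
  obtain ⟨k, rfl⟩ : d ∣ i := h ▸ Nat.gcd_dvd_left i (3 * d)
  have hk : Nat.gcd k 3 = 1 := by
    rw [mul_comm 3 d, Nat.gcd_mul_left] at h
    exact (Nat.mul_eq_left hd.ne').mp h
  have hk3 : k % 3 ≠ 0 := fun h0 ↦ by
    have := Nat.dvd_gcd (Nat.dvd_of_mod_eq_zero h0) (dvd_refl 3)
    omega
  rw [mul_comm 3 d, Nat.mul_mod_mul_left]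
  rcases (by omega : k % 3 = 1 ∨ k % 3 = 2) with h1 | h2
  · left; rw [h1, mul_one]
  · right; rw [h2, mul_comm]

namespace GaloisField

variable {p : ℕ} [Fact p.Prime] {n : ℕ}

theorem pow_pow_mul_eq_self (x : GaloisField p n) (k : ℕ) : x ^ p ^ (n * k) = x := by
  rcases eq_or_ne n 0 with rfl | hn
  · simp
  have : Fintype (GaloisField p n) := Fintype.ofFinite _
  have hcard : Fintype.card (GaloisField p n) = p ^ n := by
    rw [Fintype.card_eq_nat_card, card p n hn]
  rw [pow_mul, ← hcard, FiniteField.pow_card_pow]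

theorem pow_pow_mod (x : GaloisField p n) (i : ℕ) : x ^ p ^ i = x ^ p ^ (i % n) := by
  conv_lhs => rw [← Nat.div_add_mod i n, pow_add, pow_mul, pow_pow_mul_eq_self]

end GaloisField

section RelTrRelNr

variable {K : Type} {d m : ℕ} {w : K}

theorem pow_two_pow_mul_pow_two_pow [Monoid K] (w : K) (d k : ℕ) :
    (w ^ 2 ^ (d * k)) ^ 2 ^ d = w ^ 2 ^ (d * (k + 1)) := by
  rw [← pow_mul, ← pow_add, Nat.mul_succ]

variable [CommRing K]

theorem relTr_three (d : ℕ) (w : K) : relTr d 3 w = w + w ^ 2 ^ d + w ^ 2 ^ (2 * d) := by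
  simp [relTr, Finset.sum_range_succ, mul_comm d 2]

theorem relNr_three (d : ℕ) (w : K) : relNr d 3 w = w * w ^ 2 ^ d * w ^ 2 ^ (2 * d) := by
  simp [relNr, Finset.prod_range_succ, mul_comm d 2]

theorem relNr_pow_two_pow_eq_self (hw : w ^ 2 ^ (d * m) = w) :
    relNr d m w ^ 2 ^ d = relNr d m w := by
  rw [relNr, ← Finset.prod_pow]
  simp only [pow_two_pow_mul_pow_two_pow]
  exact Finset.prod_range_succ_shift_of_eq (fun k ↦ w ^ 2 ^ (d * k)) (by simpa using hw)

theorem relTr_pow_two_pow_eq_self [CharP K 2] (hw : w ^ 2 ^ (d * m) = w) :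
    relTr d m w ^ 2 ^ d = relTr d m w := by
  rw [relTr, sum_pow_char_pow]
  simp only [pow_two_pow_mul_pow_two_pow]
  exact Finset.sum_range_succ_shift_of_eq (fun k ↦ w ^ 2 ^ (d * k)) (by simpa using hw)

end RelTrRelNr

theorem add_pow_two_pow_eq_relTr_add_relNr_mul {K : Type} [Field K] [CharP K 2] {d i : ℕ}
    (w : K) (hi : w ^ 2 ^ i = w ^ 2 ^ d ∨ w ^ 2 ^ i = w ^ 2 ^ (2 * d)) :
    w + w ^ 2 ^ i = relTr d 3 w + relNr d 3 w * (1 / w ^ (2 ^ i + 1)) := by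
  rcases eq_or_ne w 0 with rfl | hw
  · simp [relTr, relNr]
  have two_eq_zero := CharTwo.two_eq_zero (R := K)
  rw [relTr_three, relNr_three, pow_succ]
  rcases hi with h | h <;> rw [h] <;> field_simp
  · linear_combination (-w ^ 2 ^ (2 * d)) * two_eq_zero
  · linear_combination (-w ^ 2 ^ d) * two_eq_zero

theorem stmt7_general (n i d : ℕ) (hn : n = 3 * d)
    (hd1 : d = Nat.gcd i n)
    (c : GaloisField 2 n) (hc : c ^ 2 ^ d = c) (hc0 : c ≠ 0)
    (w : GaloisField 2 n) :
    w + w ^ 2 ^ i = c * relTr d 3 w * (1 / c) + relNr d 3 w * (1 / w ^ (2 ^ i + 1)) ∧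
    ∃ a₁ a₂ a₃ : GaloisField 2 n,
      (a₁ ^ 2 ^ d = a₁ ∧ a₂ ^ 2 ^ d = a₂ ∧ a₃ ^ 2 ^ d = a₃) ∧
      ¬(a₁ = 0 ∧ a₂ = 0 ∧ a₃ = 0) ∧
      a₁ * (1 / c) + a₂ * (1 / w ^ (2 ^ i + 1)) + a₃ * (w + w ^ 2 ^ i) = 0 := by
  have hw : w ^ 2 ^ (d * 3) = w := by
    simpa [hn, mul_comm] using GaloisField.pow_pow_mul_eq_self w 1
  have hconj : w ^ 2 ^ i = w ^ 2 ^ d ∨ w ^ 2 ^ i = w ^ 2 ^ (2 * d) := by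
    have hmod := Nat.mod_three_mul_eq_of_gcd_eq (i := i) (d := d) (by rw [← hn, hd1])
    rw [← hn] at hmod
    rw [GaloisField.pow_pow_mod w i]
    rcases hmod with h | h <;> rw [h] <;> simp
  have key : w + w ^ 2 ^ i =
      c * relTr d 3 w * (1 / c) + relNr d 3 w * (1 / w ^ (2 ^ i + 1)) := by
    rw [mul_one_div, mul_div_cancel_left₀ _ hc0]
    exact add_pow_two_pow_eq_relTr_add_relNr_mul w hconj
  refine ⟨key, c * relTr d 3 w, relNr d 3 w, 1,
    ⟨?_, relNr_pow_two_pow_eq_self hw, one_pow _⟩, fun h ↦ one_ne_zero h.2.2, ?_⟩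
  · rw [mul_pow, hc, relTr_pow_two_pow_eq_self hw]
  · rw [one_mul, ← key, CharTwo.add_self_eq_zero]

/-- for `n = 3d` with `d = gcd(2i,n) = gcd(i,n)`, `c ∈ F_{2^d} \ F_2`
and `w ∈ F_{2^n}^×`, one has
`w + w^{2^i} = c·tr^n_d(w)·(1/c) + nr^n_d(w)·(1/w^{2^i+1})`; in particular
`{1/c, 1/w^{2^i+1}, w + w^{2^i}}` is linearly dependent over `F_{2^d}`. -/
theorem stmt7 (n i d : ℕ) (hi : 0 < i) (hn : n = 3 * d)
    (hd2 : d = Nat.gcd (2 * i) n) (hd1 : d = Nat.gcd i n)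
    (c : GaloisField 2 n) (hc : c ^ 2 ^ d = c) (hc0 : c ≠ 0) (hc1 : c ≠ 1)
    (w : GaloisField 2 n) (hw : w ≠ 0) :
    w + w ^ 2 ^ i = c * relTr d 3 w * (1 / c) + relNr d 3 w * (1 / w ^ (2 ^ i + 1)) ∧
    ∃ a₁ a₂ a₃ : GaloisField 2 n,
      (a₁ ^ 2 ^ d = a₁ ∧ a₂ ^ 2 ^ d = a₂ ∧ a₃ ^ 2 ^ d = a₃) ∧
      ¬(a₁ = 0 ∧ a₂ = 0 ∧ a₃ = 0) ∧
      a₁ * (1 / c) + a₂ * (1 / w ^ (2 ^ i + 1)) + a₃ * (w + w ^ 2 ^ i) = 0 :=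
  stmt7_general n i d hn hd1 c hc hc0 w
end

section
/- Let n = 3d where d is even. Then for every c' ∈ F_{2^d} \ F_2 there exists w ∈ F_{2^n} \ F_{2^d} such that tr^n_d(w) = 0 and nr^n_d(w) = c'. -/
open Polynomial

namespace FiniteField

variable {F K : Type*} [Field F] [Finite F] [Field K] [Algebra F K]

theorem pow_natCard_eq_self_iff_mem_range {x : K} :
    x ^ Nat.card F = x ↔ x ∈ Set.range (algebraMap F K) := by
  classical
  have := Fintype.ofFinite F
  rw [Nat.card_eq_fintype_card]
  have hX : (X ^ Fintype.card F - X : K[X]) ≠ 0 := X_pow_card_sub_X_ne_zero K Fintype.one_lt_card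
  refine ⟨fun hx ↦ ?_, ?_⟩
  · -- the `q` elements of `F` already exhaust the at most `q` roots of `X^q - X` in `K`
    set roots := (X ^ Fintype.card F - X : K[X]).roots.toFinset
    have hsub : Finset.univ.image (algebraMap F K) ⊆ roots := by
      simp [Finset.subset_iff, roots, hX, ← map_pow, pow_card]
    have hcard : roots.card ≤ (Finset.univ.image (algebraMap F K)).card := by
      rw [Finset.card_image_of_injective _ (algebraMap F K).injective, Finset.card_univ,
        ← X_pow_card_sub_X_natDegree_eq K Fintype.one_lt_card]
      exact (Multiset.toFinset_card_le _).trans (card_roots' _)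
    have hx : x ∈ roots := by simp [roots, hX, hx]
    simpa [← Finset.eq_of_subset_of_card_le hsub hcard] using hx
  · rintro ⟨y, rfl⟩
    rw [← map_pow, pow_card]

theorem exists_forall_pow_three_add_mul_ne {c : F} (hc : c ≠ 0) :
    ∃ a : F, ∀ x : F, x ^ 3 + a * x ≠ c := by
  classical
  have := Fintype.ofFinite F
  by_contra! h
  have hsub : (Finset.univ : Finset F) ⊆
      (Finset.univ.erase 0).image fun x ↦ (c - x ^ 3) / x := by
    intro a _
    obtain ⟨x, hx⟩ := h a
    have hx0 : x ≠ 0 := by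
      rintro rfl
      exact hc (by simpa using hx.symm)
    refine Finset.mem_image.mpr ⟨x, by simpa using hx0, ?_⟩
    rw [div_eq_iff hx0]
    linear_combination -hx
  have hle := (Finset.card_le_card hsub).trans Finset.card_image_le
  rw [Finset.card_erase_of_mem (Finset.mem_univ 0)] at hle
  have : 0 < Finset.univ.card := Finset.univ_nonempty (α := F).card_pos
  omega

end FiniteField

theorem Polynomial.irreducible_X_pow_three_add_C_mul_X_sub_C {F : Type*} [Field F] {a c : F}
    (h : ∀ x : F, x ^ 3 + a * x ≠ c) : Irreducible (X ^ 3 + C a * X - C c : F[X]) := by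
  have hmonic : (X ^ 3 + C a * X - C c : F[X]).Monic := by monicity!
  have hdeg : (X ^ 3 + C a * X - C c : F[X]).natDegree = 3 := by compute_degree!
  rw [hmonic.irreducible_iff_roots_eq_zero_of_degree_le_three (by omega) (by omega),
    Multiset.eq_zero_iff_forall_notMem]
  intro x hx
  have hroot := (mem_roots hmonic.ne_zero).mp hx
  simp only [IsRoot, eval_sub, eval_add, eval_pow, eval_X, eval_mul, eval_C] at hroot
  exact h x (sub_eq_zero.mp hroot)

theorem Irreducible.exists_aeval_eq_zero_of_natDegree_dvd_finrank {F K : Type*} [Field F]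
    [Field K] [Algebra F K] [Finite K] {f : F[X]} (hf : Irreducible f)
    (h : f.natDegree ∣ Module.finrank F K) : ∃ w : K, aeval w f = 0 := by
  have : Fact (Irreducible f) := ⟨hf⟩
  obtain ⟨φ⟩ := FiniteField.nonempty_algHom_of_finrank_dvd (K := AdjoinRoot f) (L := K)
    (by rwa [(AdjoinRoot.powerBasis hf.ne_zero).finrank, AdjoinRoot.powerBasis_dim])
  exact ⟨φ (AdjoinRoot.root f), by
    rw [aeval_algHom_apply, AdjoinRoot.aeval_eq, AdjoinRoot.mk_self, map_zero]⟩

open IntermediateField in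
theorem Algebra.norm_eq_neg_one_pow_mul_coeff_zero_minpoly {F K : Type*} [Field F] [Field K]
    [Algebra F K] [FiniteDimensional F K] {w : K}
    (h : (minpoly F w).natDegree = Module.finrank F K) :
    Algebra.norm F w = (-1) ^ Module.finrank F K * (minpoly F w).coeff 0 := by
  have hw : IsIntegral F w := .of_finite F w
  have hrank : Module.finrank F⟮w⟯ K = 1 := by
    have := Module.finrank_mul_finrank F F⟮w⟯ K
    rw [adjoin.finrank hw, h] at this
    exact (Nat.mul_eq_left Module.finrank_pos.ne').mp this
  have hgen := PowerBasis.norm_gen_eq_coeff_zero_minpoly (IntermediateField.adjoin.powerBasis hw)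
  rw [IntermediateField.adjoin.powerBasis_gen, IntermediateField.adjoin.powerBasis_dim,
    minpoly_gen, h] at hgen
  rw [Algebra.norm_eq_norm_adjoin, hrank, pow_one, hgen]

theorem FiniteField.exists_trace_eq_zero_and_norm_eq_of_finrank_eq_three {F K : Type*} [Field F]
    [Field K] [Algebra F K] [Finite K] (hK : Module.finrank F K = 3) {c : F} (hc : c ≠ 0) :
    ∃ w : K, w ∉ Set.range (algebraMap F K) ∧
      Algebra.trace F K w = 0 ∧ Algebra.norm F w = c := by
  have : Finite F := Finite.of_injective _ (algebraMap F K).injective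
  obtain ⟨a, ha⟩ := exists_forall_pow_three_add_mul_ne hc
  have hf := irreducible_X_pow_three_add_C_mul_X_sub_C ha
  have hdeg : (X ^ 3 + C a * X - C c : F[X]).natDegree = 3 := by compute_degree!
  obtain ⟨w, hw⟩ := hf.exists_aeval_eq_zero_of_natDegree_dvd_finrank (K := K) (by rw [hdeg, hK])
  have hmin : minpoly F w = X ^ 3 + C a * X - C c :=
    (minpoly.eq_of_irreducible_of_monic hf hw (by monicity!)).symm
  refine ⟨w, ?_, ?_, ?_⟩
  · rintro ⟨y, rfl⟩
    rw [aeval_algebraMap_apply, map_eq_zero_iff _ (algebraMap F K).injective] at hw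
    exact ha y (by simpa [sub_eq_zero] using hw)
  · rw [trace_eq_finrank_mul_minpoly_nextCoeff, hmin, nextCoeff_of_natDegree_pos (by omega), hdeg]
    simp
  · rw [Algebra.norm_eq_neg_one_pow_mul_coeff_zero_minpoly (by rw [hmin, hdeg, hK]), hmin, hK]
    norm_num

theorem relTr_eq_algebraMap_trace {F K : Type} [Field F] [Field K] [Algebra F K] [Finite K]
    {d : ℕ} (hF : Nat.card F = 2 ^ d) (x : K) :
    relTr d (Module.finrank F K) x = algebraMap F K (Algebra.trace F K x) := by
  simp [relTr, FiniteField.algebraMap_trace_eq_sum_pow, hF, pow_mul]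

theorem relNr_eq_algebraMap_norm {F K : Type} [Field F] [Field K] [Algebra F K] [Finite K]
    {d : ℕ} (hF : Nat.card F = 2 ^ d) (x : K) :
    relNr d (Module.finrank F K) x = algebraMap F K (Algebra.norm F x) := by
  simp [relNr, FiniteField.algebraMap_norm_eq_prod_pow, hF, pow_mul]

theorem stmt9_general (n d : ℕ) (hd : 0 < d) (hn : n = 3 * d)
    (c' : GaloisField 2 n) (hc : c' ^ 2 ^ d = c') (hc0 : c' ≠ 0) :
    ∃ w : GaloisField 2 n, ¬(w ^ 2 ^ d = w) ∧ relTr d 3 w = 0 ∧ relNr d 3 w = c' := by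
  obtain ⟨φ⟩ : Nonempty (GaloisField 2 d →ₐ[ZMod 2] GaloisField 2 n) :=
    FiniteField.nonempty_algHom_of_finrank_dvd (by
      rw [GaloisField.finrank 2 hd.ne', GaloisField.finrank 2 (by omega), hn]
      exact dvd_mul_left d 3)
  let : Algebra (GaloisField 2 d) (GaloisField 2 n) := φ.toAlgebra
  have hF : Nat.card (GaloisField 2 d) = 2 ^ d := GaloisField.card 2 d hd.ne'
  have hK : Module.finrank (GaloisField 2 d) (GaloisField 2 n) = 3 := by
    have hcard := Module.natCard_eq_pow_finrank (K := GaloisField 2 d) (V := GaloisField 2 n)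
    rw [GaloisField.card 2 n (by omega), hF, ← pow_mul] at hcard
    have := Nat.pow_right_injective le_rfl hcard
    exact Nat.eq_of_mul_eq_mul_left hd (by rw [← this, hn, mul_comm])
  obtain ⟨c, rfl⟩ := FiniteField.pow_natCard_eq_self_iff_mem_range.mp (hF ▸ hc)
  obtain ⟨w, hwF, htr, hnr⟩ := FiniteField.exists_trace_eq_zero_and_norm_eq_of_finrank_eq_three
    hK (c := c) (by rintro rfl; exact hc0 (map_zero _))
  refine ⟨w, fun hw ↦ hwF (FiniteField.pow_natCard_eq_self_iff_mem_range.mp (hF ▸ hw)),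
    ?_, ?_⟩
  · rw [← hK, relTr_eq_algebraMap_trace hF, htr, map_zero]
  · rw [← hK, relNr_eq_algebraMap_norm hF, hnr]

/-- for `n = 3d` with `d` even, every `c' ∈ F_{2^d} \ F_2` is the
relative norm of some `w ∈ F_{2^n} \ F_{2^d}` of relative trace zero. -/
theorem stmt9 (n d : ℕ) (hd : 0 < d) (hde : Even d) (hn : n = 3 * d)
    (c' : GaloisField 2 n) (hc : c' ^ 2 ^ d = c') (hc0 : c' ≠ 0) (hc1 : c' ≠ 1) :
    ∃ w : GaloisField 2 n, ¬(w ^ 2 ^ d = w) ∧ relTr d 3 w = 0 ∧ relNr d 3 w = c' :=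
  stmt9_general n d hd hn c' hc hc0
end

section
/- Let n = dm and i = dℓ with gcd(m, 2ℓ) = 1 and n > d, and let u be the multiplicative inverse of 2^i + 1 modulo 2^n − 1. Then for every c ∈ F_{2^d} \ F_2, both monomials x^u and x^{2u} = x^{(2^{im}+1)/(2^i+1)} are PcN functions on F_{2^n} (i.e., their c-differential uniformity equals 1). -/
/-- The `c`-differential uniformity of `F`. -/
noncomputable def cDelta {K : Type} [Field K] (c : K) (F : K → K) : ℕ :=
  sSup { k : ℕ | ∃ a b : K, (c = 1 → a ≠ 0) ∧
    k = Nat.card {x : K // F (x + a) + c * F x = b} }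

/-!
Write `q = 2^i`. Since `(q + 1) u ≡ 1` modulo `2^n - 1`, the map `x ↦ x^u` is the permutation
inverse to the Gold map `x ↦ x^(q+1)`, and `c^q = c` because `d ∣ i`. Substituting `x = y^(q+1)`
turns `(x + a)^u + c x^u = b` into `y^(q+1) + a = (b + c y)^(q+1)`. As `c^q = c`, completing the
square for the Gold map rewrites this as `((c + 1) y + s)^(q+1) = R` for constants `s`, `R`, and
since `c ≠ 1` this has exactly one solution `y`. For `x^(2u)`, composing with the Frobenius
automorphism replaces `c` by `√c`, which satisfies the same hypotheses. Finally
`(2^(im) + 1)/(2^i + 1) ≡ 2u` modulo `2^n - 1`, because `m` is odd and `n ∣ im`.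
-/

theorem cDelta_eq_one_of_existsUnique {K : Type} [Field K] {c : K} {F : K → K}
    (h : ∀ a b : K, ∃! x : K, F (x + a) + c * F x = b) : cDelta c F = 1 := by
  have hcard (a b : K) : Nat.card {x : K // F (x + a) + c * F x = b} = 1 := by
    obtain ⟨x, hx, hunique⟩ := h a b
    exact Nat.card_eq_one_iff_exists.mpr ⟨⟨x, hx⟩, fun y => Subtype.ext (hunique y y.2)⟩
  have hset : { k : ℕ | ∃ a b : K, (c = 1 → a ≠ 0) ∧
      k = Nat.card {x : K // F (x + a) + c * F x = b} } = {1} := by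
    ext k
    constructor
    · rintro ⟨a, b, -, rfl⟩
      exact hcard a b
    · rintro rfl
      exact ⟨1, 0, fun _ => one_ne_zero, (hcard 1 0).symm⟩
  rw [cDelta, hset, csSup_singleton]

theorem existsUnique_ringEquiv_comp_iff {R : Type*} [Semiring R] (σ : R ≃+* R) (F : R → R)
    (a b c : R) :
    (∃! x : R, σ (F (x + a)) + c * σ (F x) = b) ↔
      ∃! x : R, F (x + a) + σ.symm c * F x = σ.symm b :=
  existsUnique_congr fun x => by
    rw [σ.eq_symm_apply, map_add, map_mul, RingEquiv.apply_symm_apply]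

def powEquiv {M : Type*} [Monoid M] (u v : ℕ) (h : ∀ x : M, x ^ (u * v) = x) : M ≃ M where
  toFun x := x ^ u
  invFun x := x ^ v
  left_inv x := by simp only [← pow_mul, h]
  right_inv x := by simp only [← pow_mul, mul_comm v, h]

section CharTwo

variable {R : Type*} [CommRing R] [CharP R 2]

/-- Completing the square for the Gold map `y ↦ y ^ (2 ^ i + 1)`. -/
theorem add_mul_pow_two_pow_add_one {i : ℕ} {b c s : R} (hc : c ^ 2 ^ i = c)
    (hs : (c + 1) * s = c * b) (y : R) :
    (b + c * y) ^ (2 ^ i + 1) =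
      y ^ (2 ^ i + 1) + ((c + 1) * y + s) ^ (2 ^ i + 1) + b ^ (2 ^ i + 1) + s ^ (2 ^ i + 1) := by
  have h2 : (2 : R) = 0 := CharTwo.two_eq_zero
  have hc1 : (c + 1) ^ 2 ^ i = c + 1 := by rw [add_pow_char_pow, hc, one_pow]
  have hsq : (c + 1) * s ^ 2 ^ i = c * b ^ 2 ^ i := by
    rw [← hc1, ← mul_pow, hs, mul_pow, hc]
  simp only [pow_succ _ (2 ^ i), add_pow_char_pow, mul_pow, hc, hc1]
  linear_combination (-(y ^ 2 ^ i)) * hs + (-y) * hsq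
    - (s ^ 2 ^ i * s + c * y ^ 2 ^ i * y + y ^ 2 ^ i * y) * h2

end CharTwo

section CharTwoField

variable {K : Type*} [Field K] [CharP K 2] {i u : ℕ}

theorem existsUnique_pow_add_mul_pow_eq (hu : ∀ x : K, x ^ ((2 ^ i + 1) * u) = x) {c : K}
    (hc : c ^ 2 ^ i = c) (hc1 : c ≠ 1) (a b : K) :
    ∃! x : K, (x + a) ^ u + c * x ^ u = b := by
  set e := powEquiv (2 ^ i + 1) u hu
  have hc1' : c + 1 ≠ 0 := fun h => hc1 (by simpa using CharTwo.add_eq_iff_eq_add.mp h)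
  set s := c * b / (c + 1)
  have hs : (c + 1) * s = c * b := mul_div_cancel₀ _ hc1'
  have key (y : K) : (y ^ (2 ^ i + 1) + a) ^ u + c * (y ^ (2 ^ i + 1)) ^ u = b ↔
      ((c + 1) * y + s) ^ (2 ^ i + 1) = a + b ^ (2 ^ i + 1) + s ^ (2 ^ i + 1) := by
    have h2 : (2 : K) = 0 := CharTwo.two_eq_zero
    calc _ ↔ (y ^ (2 ^ i + 1) + a) ^ u = b + c * y := by
          rw [← pow_mul, hu, CharTwo.add_eq_iff_eq_add]
      _ ↔ y ^ (2 ^ i + 1) + a = (b + c * y) ^ (2 ^ i + 1) := e.symm_apply_eq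
      _ ↔ _ := by
          rw [add_mul_pow_two_pow_add_one hc hs]
          constructor <;> intro h <;>
            linear_combination -h - (b ^ (2 ^ i + 1) + s ^ (2 ^ i + 1)) * h2
  have hbij : Function.Bijective fun y => e ((c + 1) * y + s) :=
    e.bijective.comp ((Equiv.addRight s).bijective.comp (mulLeft_bijective₀ _ hc1'))
  exact (e.existsUnique_congr_right.symm.trans (existsUnique_congr key)).mpr (hbij.existsUnique _)

theorem existsUnique_pow_two_mul_add_mul_pow_eq [PerfectRing K 2]
    (hu : ∀ x : K, x ^ ((2 ^ i + 1) * u) = x) {c : K} (hc : c ^ 2 ^ i = c) (hc1 : c ≠ 1)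
    (a b : K) : ∃! x : K, (x + a) ^ (2 * u) + c * x ^ (2 * u) = b := by
  set σ := frobeniusEquiv K 2
  have hσ (x : K) : x ^ (2 * u) = σ (x ^ u) := by
    rw [frobeniusEquiv_apply, frobenius_def, ← pow_mul, mul_comm]
  simp only [hσ]
  rw [existsUnique_ringEquiv_comp_iff σ (· ^ u)]
  refine existsUnique_pow_add_mul_pow_eq hu ?_ ?_ a _
  · rw [← map_pow, hc]
  · simpa using hc1

end CharTwoField

theorem FiniteField.pow_eq_pow_of_modEq {K : Type*} [Field K] [Finite K]
    {a b : ℕ} (h : a ≡ b [MOD Nat.card K - 1]) {x : K} (hx : x ≠ 0) : x ^ a = x ^ b := by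
  have := Fintype.ofFinite K
  refine _root_.pow_eq_pow_of_modEq h ?_
  rw [Nat.card_eq_fintype_card]
  exact FiniteField.pow_card_sub_one_eq_one x hx

theorem FiniteField.pow_eq_pow_of_modEq_of_ne_zero {K : Type*} [Field K] [Finite K]
    {a b : ℕ} (h : a ≡ b [MOD Nat.card K - 1]) (ha : a ≠ 0) (hb : b ≠ 0) (x : K) :
    x ^ a = x ^ b := by
  rcases eq_or_ne x 0 with rfl | hx
  · rw [zero_pow ha, zero_pow hb]
  · exact pow_eq_pow_of_modEq h hx

theorem Nat.div_modEq_mul_of_mul_modEq_one {a b u N : ℕ} (hab : a ∣ b)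
    (hu : a * u ≡ 1 [MOD N]) : b / a ≡ b * u [MOD N] :=
  calc b / a = b / a * 1 := (mul_one _).symm
    _ ≡ b / a * (a * u) [MOD N] := (hu.mul_left _).symm
    _ = b * u := by rw [← mul_assoc, Nat.div_mul_cancel hab]

theorem two_pow_add_one_div_modEq {n i k u : ℕ} (hk : n ∣ k) (hdvd : 2 ^ i + 1 ∣ 2 ^ k + 1)
    (hu : (2 ^ i + 1) * u ≡ 1 [MOD 2 ^ n - 1]) :
    (2 ^ k + 1) / (2 ^ i + 1) ≡ 2 * u [MOD 2 ^ n - 1] := by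
  obtain ⟨l, rfl⟩ := hk
  have hpow : 2 ^ (n * l) ≡ 1 [MOD 2 ^ n - 1] := by
    simpa [pow_mul] using (Nat.modEq_sub Nat.one_le_two_pow).pow l
  calc _ ≡ (2 ^ (n * l) + 1) * u [MOD _] := Nat.div_modEq_mul_of_mul_modEq_one hdvd hu
    _ ≡ (1 + 1) * u [MOD _] := (hpow.add_right 1).mul_right u

theorem stmt13_general (n i d m l u : ℕ) (hnm : n = d * m) (hil : i = d * l)
    (hgcd : Nat.gcd m (2 * l) = 1) (hdn : d < n)
    (hu : (2 ^ i + 1) * u ≡ 1 [MOD 2 ^ n - 1]) :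
    ∀ c : GaloisField 2 n, c ^ 2 ^ d = c → c ≠ 0 → c ≠ 1 →
      cDelta c (fun x : GaloisField 2 n => x ^ u) = 1 ∧
      cDelta c (fun x : GaloisField 2 n => x ^ (2 * u)) = 1 ∧
      cDelta c (fun x : GaloisField 2 n => x ^ ((2 ^ (i * m) + 1) / (2 ^ i + 1))) = 1 := by
  intro c hcd hc0 hc1
  have hodd : Odd m :=
    Nat.coprime_two_right.mp (Nat.Coprime.coprime_dvd_right (dvd_mul_right 2 l) hgcd)
  have hdvd : 2 ^ i + 1 ∣ 2 ^ (i * m) + 1 := by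
    simpa [pow_mul] using Odd.nat_add_dvd_pow_add_pow (2 ^ i) 1 hodd
  have hexp : (2 ^ (i * m) + 1) / (2 ^ i + 1) ≡ 2 * u [MOD 2 ^ n - 1] :=
    two_pow_add_one_div_modEq ⟨l, by rw [hnm, hil]; ring⟩ hdvd hu
  rw [← GaloisField.card 2 n (by omega)] at hu hexp
  have hu0 : u ≠ 0 := by
    -- otherwise `c = c ^ 1 = c ^ 0 = 1`
    rintro rfl
    exact hc1 (by simpa using (FiniteField.pow_eq_pow_of_modEq hu hc0).symm)
  have hgold (x : GaloisField 2 n) : x ^ ((2 ^ i + 1) * u) = x := by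
    simpa using FiniteField.pow_eq_pow_of_modEq_of_ne_zero hu (by positivity) one_ne_zero x
  have hci : c ^ 2 ^ i = c := by
    have hfix : Function.IsFixedPt (· ^ 2 ^ d) c := hcd
    have := hfix.iterate l
    rw [pow_iterate] at this
    rwa [hil, pow_mul]
  have hpcn : cDelta c (fun x : GaloisField 2 n => x ^ (2 * u)) = 1 :=
    cDelta_eq_one_of_existsUnique (existsUnique_pow_two_mul_add_mul_pow_eq hgold hci hc1)
  refine ⟨?_, hpcn, ?_⟩
  · exact cDelta_eq_one_of_existsUnique (existsUnique_pow_add_mul_pow_eq hgold hci hc1)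
  · have he0 : (2 ^ (i * m) + 1) / (2 ^ i + 1) ≠ 0 :=
      (Nat.div_pos (Nat.le_of_dvd (by positivity) hdvd) (by positivity)).ne'
    simpa only [FiniteField.pow_eq_pow_of_modEq_of_ne_zero hexp he0 (by positivity)] using hpcn

/-- with `n = dm`, `i = dℓ`, `gcd(m, 2ℓ) = 1`, `n > d`, and `u` the
inverse of `2^i + 1` mod `2^n - 1`, the monomials `x^u` and
`x^{2u} = x^{(2^{im}+1)/(2^i+1)}` are PcN on `F_{2^n}` for every
`c ∈ F_{2^d} \ F_2`. -/
theorem stmt13 (n i d m l u : ℕ) (hd : 0 < d) (hnm : n = d * m) (hil : i = d * l)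
    (hgcd : Nat.gcd m (2 * l) = 1) (hdn : d < n)
    (hu : (2 ^ i + 1) * u ≡ 1 [MOD 2 ^ n - 1]) :
    ∀ c : GaloisField 2 n, c ^ 2 ^ d = c → c ≠ 0 → c ≠ 1 →
      cDelta c (fun x : GaloisField 2 n => x ^ u) = 1 ∧
      cDelta c (fun x : GaloisField 2 n => x ^ (2 * u)) = 1 ∧
      cDelta c (fun x : GaloisField 2 n => x ^ ((2 ^ (i * m) + 1) / (2 ^ i + 1))) = 1 :=
  stmt13_general n i d m l u hnm hil hgcd hdn hu
end
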